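/- arXiv:2405.01339 — 2 statements merged into one kernel-verified Lean document; each statement's English description precedes it below -/
import Mathlib

section
/- Let P ⊆ ℝ^d be a finite set that is β-stable for k-means. Let 1 ≤ γ ≤ 1 + β/2 and let {C_1,…,C_k} be a partition of P whose k-means cost with the cluster centroids a_1,…,a_k (a_j is the centroid of C_j) is at most γ·OPT_k. Then for any i, j ∈ [k] with i ≠ j, ‖a_i − a_j‖² ≥ β·OPT_k / (2·min(|C_i|, |C_j|)). -/
/-!
Merging cluster `i` into cluster `j` gives a clustering with `k - 1` centers whose cost, by the
bias–variance decomposition `∑_{p ∈ C} ‖p - v‖² = ∑_{p ∈ C} ‖p - centroid C‖² + |C| ‖centroid C - v‖²`,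
is the cost of the given clustering plus `|C_i| ‖a_i - a_j‖²`. Hence
`OPT_{k-1} ≤ γ OPT_k + min(|C_i|, |C_j|) ‖a_i - a_j‖²`, and β-stability together with
`γ ≤ 1 + β/2` leaves `(β/2) OPT_k ≤ min(|C_i|, |C_j|) ‖a_i - a_j‖²`.
-/

open Finset

noncomputable section

/-- `ℝ^d` as a Euclidean space. -/
abbrev Pt (d : ℕ) := EuclideanSpace ℝ (Fin d)

/-- `cost(p,S) = min_{s ∈ S} ‖p - s‖²`. -/
noncomputable def pcost {d : ℕ} (p : Pt d) (S : Finset (Pt d)) : ℝ :=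
  sInf ((fun s => ‖p - s‖ ^ 2) '' (S : Set (Pt d)))

/-- `cost(P,S) = ∑_{p ∈ P} min_{s ∈ S} ‖p - s‖²`. -/
noncomputable def scost {d : ℕ} (P S : Finset (Pt d)) : ℝ :=
  ∑ p ∈ P, pcost p S

/-- `OPT_j`: the optimal k-means cost of `P` with `j` centers. -/
noncomputable def kmOPT {d : ℕ} (P : Finset (Pt d)) (j : ℕ) : ℝ :=
  sInf ((fun S : Finset (Pt d) => scost P S) '' {S : Finset (Pt d) | S.card = j})

section Centroid

variable {E ι : Type*} [NormedAddCommGroup E] [InnerProductSpace ℝ E] [Fintype ι] [DecidableEq ι]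

def centroidOf (C : Finset E) : E := (#C : ℝ)⁻¹ • ∑ p ∈ C, p

theorem sum_sub_centroidOf_eq_zero (C : Finset E) : ∑ p ∈ C, (p - centroidOf C) = 0 := by
  rcases C.eq_empty_or_nonempty with rfl | hC
  · simp
  rw [sum_sub_distrib, sum_const, sub_eq_zero, ← Nat.cast_smul_eq_nsmul ℝ, centroidOf,
    smul_inv_smul₀ (Nat.cast_ne_zero.mpr hC.card_ne_zero)]

theorem sum_norm_sub_sq_eq_sum_norm_sub_centroidOf_sq_add (C : Finset E) (v : E) :
    ∑ p ∈ C, ‖p - v‖ ^ 2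
      = ∑ p ∈ C, ‖p - centroidOf C‖ ^ 2 + #C * ‖centroidOf C - v‖ ^ 2 := by
  have hexpand (p : E) : ‖p - v‖ ^ 2 = ‖p - centroidOf C‖ ^ 2
      + 2 * inner ℝ (p - centroidOf C) (centroidOf C - v) + ‖centroidOf C - v‖ ^ 2 := by
    rw [← norm_add_sq_real, sub_add_sub_cancel]
  have hcross : ∑ p ∈ C, inner ℝ (p - centroidOf C) (centroidOf C - v) = 0 := by
    rw [← sum_inner, sum_sub_centroidOf_eq_zero, inner_zero_left]
  rw [sum_congr rfl fun p _ => hexpand p, sum_add_distrib, sum_add_distrib, ← mul_sum, hcross,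
    sum_const, nsmul_eq_mul]
  ring

def clusterCost (P : Finset E) (cl : E → ι) : ℝ :=
  ∑ t, ∑ p ∈ P with cl p = t, ‖p - centroidOf {p ∈ P | cl p = t}‖ ^ 2

theorem sum_norm_sub_sq_eq_clusterCost_add (P : Finset E) (cl : E → ι) (b : ι → E) :
    ∑ p ∈ P, ‖p - b (cl p)‖ ^ 2 = clusterCost P cl
      + ∑ t, #{p ∈ P | cl p = t} * ‖centroidOf {p ∈ P | cl p = t} - b t‖ ^ 2 := by
  rw [clusterCost, ← sum_add_distrib, ← sum_fiberwise P cl]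
  refine sum_congr rfl fun t _ => ?_
  rw [← sum_norm_sub_sq_eq_sum_norm_sub_centroidOf_sq_add]
  exact sum_congr rfl fun p hp => by rw [(mem_filter.mp hp).2]

end Centroid

section KMeans

variable {d : ℕ} {ι : Type*} [Fintype ι] [DecidableEq ι]

theorem pcost_le_of_mem (p : Pt d) {S : Finset (Pt d)} {s : Pt d} (hs : s ∈ S) :
    pcost p S ≤ ‖p - s‖ ^ 2 :=
  csInf_le ⟨0, by rintro x ⟨t, -, rfl⟩; positivity⟩ ⟨s, mem_coe.mpr hs, rfl⟩

theorem scost_nonneg (P S : Finset (Pt d)) : 0 ≤ scost P S :=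
  sum_nonneg fun p _ => Real.sInf_nonneg <| by rintro x ⟨s, -, rfl⟩; positivity

theorem kmOPT_nonneg (P : Finset (Pt d)) (j : ℕ) : 0 ≤ kmOPT P j :=
  Real.sInf_nonneg <| by rintro x ⟨S, -, rfl⟩; exact scost_nonneg P S

theorem kmOPT_le_scost (P : Finset (Pt d)) {S : Finset (Pt d)} {j : ℕ} (hS : #S = j) :
    kmOPT P j ≤ scost P S :=
  csInf_le ⟨0, by rintro x ⟨S', -, rfl⟩; exact scost_nonneg P S'⟩ ⟨S, hS, rfl⟩

/-- With no `j`-element set of centers, `kmOPT P j` is the junk value `sInf ∅ = 0`. -/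
theorem kmOPT_eq_zero_of_subsingleton [Subsingleton (Pt d)] (P : Finset (Pt d)) {j : ℕ}
    (hj : 1 < j) : kmOPT P j = 0 := by
  have hnone : {S : Finset (Pt d) | #S = j} = ∅ :=
    Set.eq_empty_of_forall_notMem fun S hS =>
      (card_le_one.mpr fun x _ y _ => Subsingleton.elim x y).not_gt (hS.symm ▸ hj)
  rw [kmOPT, hnone, Set.image_empty, Real.sInf_empty]

/-- The centers are padded to exactly `j` of them, which needs infinitely many points. -/
theorem kmOPT_le_sum_norm_sub_sq [Nontrivial (Pt d)] (P : Finset (Pt d)) (c : Pt d → Pt d)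
    {j : ℕ} (hc : #(P.image c) ≤ j) : kmOPT P j ≤ ∑ p ∈ P, ‖p - c p‖ ^ 2 := by
  have : Infinite (Pt d) := Module.Free.infinite ℝ (Pt d)
  obtain ⟨S, hcS, hS⟩ := Infinite.exists_superset_card_eq _ _ hc
  calc kmOPT P j ≤ scost P S := kmOPT_le_scost P hS
    _ ≤ ∑ p ∈ P, ‖p - c p‖ ^ 2 :=
      sum_le_sum fun p hp => pcost_le_of_mem p (hcS (mem_image_of_mem c hp))

theorem kmOPT_pred_le_clusterCost_add [Nontrivial (Pt d)] (P : Finset (Pt d)) (cl : Pt d → ι)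
    {i j : ι} (hij : i ≠ j) :
    kmOPT P (Fintype.card ι - 1) ≤ clusterCost P cl + #{p ∈ P | cl p = i} *
      ‖centroidOf {p ∈ P | cl p = i} - centroidOf {p ∈ P | cl p = j}‖ ^ 2 := by
  set a : ι → Pt d := fun t => centroidOf {p ∈ P | cl p = t}
  set b := Function.update a i (a j)
  have hcard : #(P.image (b ∘ cl)) ≤ Fintype.card ι - 1 := by
    have hsub : P.image (b ∘ cl) ⊆ (univ.erase i).image a := by
      refine image_subset_iff.mpr fun p _ => ?_
      by_cases hp : cl p = i
      · simpa [b, hp] using mem_image_of_mem a (mem_erase.mpr ⟨hij.symm, mem_univ j⟩)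
      · simpa [b, hp] using mem_image_of_mem a (mem_erase.mpr ⟨hp, mem_univ (cl p)⟩)
    calc #(P.image (b ∘ cl)) ≤ #((univ.erase i).image a) := card_le_card hsub
      _ ≤ #(univ.erase i) := card_image_le
      _ = Fintype.card ι - 1 := by rw [card_erase_of_mem (mem_univ i), card_univ]
  have hmoved : ∑ t, #{p ∈ P | cl p = t} * ‖a t - b t‖ ^ 2
      = #{p ∈ P | cl p = i} * ‖a i - a j‖ ^ 2 := by
    rw [sum_eq_single i (fun t _ ht => by simp [b, ht]) (by simp)]
    simp [b]
  calc kmOPT P (Fintype.card ι - 1) ≤ ∑ p ∈ P, ‖p - b (cl p)‖ ^ 2 :=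
        kmOPT_le_sum_norm_sub_sq P (b ∘ cl) hcard
    _ = _ := by rw [sum_norm_sub_sq_eq_clusterCost_add, hmoved]

end KMeans

theorem stable_centers_separated_general
    {d : ℕ} (k : ℕ) (β γ : ℝ) (P : Finset (Pt d)) (cl : Pt d → Fin k)
    (hγ2 : γ ≤ 1 + β / 2)
    (hstable : kmOPT P k * (1 + β) ≤ kmOPT P (k - 1)) :
    -- the clusters of the partition and their centroids
    let Cj : Fin k → Finset (Pt d) := fun j => P.filter fun p => cl p = j
    let a : Fin k → Pt d := fun j => (((Cj j).card : ℝ))⁻¹ • ∑ p ∈ Cj j, p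
    -- the clustering is a γ-approximation
    (∑ j : Fin k, ∑ p ∈ Cj j, ‖p - a j‖ ^ 2) ≤ γ * kmOPT P k →
    ∀ i j : Fin k, i ≠ j →
      β * kmOPT P k / (2 * min ((Cj i).card : ℝ) ((Cj j).card : ℝ)) ≤ ‖a i - a j‖ ^ 2 := by
  intro Cj a happrox i j hij
  have hk : 1 < k := by have := Fin.val_injective.ne hij; omega
  rcases subsingleton_or_nontrivial (Pt d) with hd | hd
  · simp [kmOPT_eq_zero_of_subsingleton P hk]
  have happrox' : clusterCost P cl ≤ γ * kmOPT P k := happrox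
  have hmerge (i j : Fin k) (hij : i ≠ j) :
      kmOPT P (k - 1) ≤ clusterCost P cl + #(Cj i) * ‖a i - a j‖ ^ 2 := by
    have h := kmOPT_pred_le_clusterCost_add P cl hij
    rwa [Fintype.card_fin] at h
  have hmin : kmOPT P (k - 1) ≤ γ * kmOPT P k + min (#(Cj i) : ℝ) #(Cj j) * ‖a i - a j‖ ^ 2 := by
    rcases min_choice (#(Cj i) : ℝ) #(Cj j) with h | h <;> rw [h]
    · linarith [hmerge i j hij]
    · rw [norm_sub_rev]
      linarith [hmerge j i hij.symm]
  have hγOPT := mul_le_mul_of_nonneg_right hγ2 (kmOPT_nonneg P k)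
  refine div_le_of_le_mul₀ (by positivity) (sq_nonneg _) ?_
  linarith

/-- Centers of a near-optimal clustering of a β-stable instance are pairwise
well separated (Lemma on approximate stability). -/
theorem stable_centers_separated
    {d : ℕ} (k : ℕ) (β γ : ℝ) (P : Finset (Pt d)) (cl : Pt d → Fin k)
    (hβ : 0 < β) (hγ1 : 1 ≤ γ) (hγ2 : γ ≤ 1 + β / 2)
    (hstable : kmOPT P k * (1 + β) ≤ kmOPT P (k - 1)) :
    -- the clusters of the partition and their centroids
    let Cj : Fin k → Finset (Pt d) := fun j => P.filter fun p => cl p = j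
    let a : Fin k → Pt d := fun j => (((Cj j).card : ℝ))⁻¹ • ∑ p ∈ Cj j, p
    -- the clustering is a γ-approximation
    (∑ j : Fin k, ∑ p ∈ Cj j, ‖p - a j‖ ^ 2) ≤ γ * kmOPT P k →
    ∀ i j : Fin k, i ≠ j →
      β * kmOPT P k / (2 * min ((Cj i).card : ℝ) ((Cj j).card : ℝ)) ≤ ‖a i - a j‖ ^ 2 :=
  stable_centers_separated_general k β γ P cl hγ2 hstable
end
end

section
/- Let P ⊂ ℝ^d be a finite set partitioned into clusters with designated centers, and let S ⊂ ℝ^d be a finite set of centers. Let T > 0, let b ≥ 0 and t ≥ 6 be integers, and let B(S) be a collection of k_{B(S)} clusters C_j (with centers a_j and average cost Δ_j := cost(C_j,a_j)/|C_j|) each of which satisfies cost(C_j,a_j) ≥ 2^b·T and cost(a_j,S) ≥ 2^{t−1}·Δ_j. Then cost(P,S) ≥ (1/12)·k_{B(S)}·2^{b+t}·T. -/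
open Finset

noncomputable section

/-!
Each point `p` of a cluster `C` with center `a` witnesses the relaxed triangle inequality
`cost(a,S) ≤ 2·cost(p,S) + 2‖p - a‖²`. Averaging over `C` and using the type condition
`cost(a,S) ≥ 2^{t-1}·cost(C,a)/|C|` gives `cost(C,S) ≥ (2^{t-2} - 1)·cost(C,a)`, and
`2^{t-2} - 1 ≥ 2^t/12` once `t ≥ 3`; the band condition then bounds `cost(C,a)` below by `2^b·T`.
Summing over the disjoint clusters inside `P` gives the claim.
-/

section Cost

variable {d : ℕ}

lemma pcost_nonneg (p : Pt d) (S : Finset (Pt d)) : 0 ≤ pcost p S :=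
  Real.sInf_nonneg (by rintro x ⟨s, _, rfl⟩; positivity)

lemma pcost_le_norm_sub_sq {p s : Pt d} {S : Finset (Pt d)} (hs : s ∈ S) :
    pcost p S ≤ ‖p - s‖ ^ 2 :=
  csInf_le ⟨0, by rintro x ⟨u, _, rfl⟩; positivity⟩ ⟨s, hs, rfl⟩

lemma exists_pcost_eq {S : Finset (Pt d)} (hS : S.Nonempty) (p : Pt d) :
    ∃ s ∈ S, pcost p S = ‖p - s‖ ^ 2 := by
  obtain ⟨s, hs, hps⟩ := (hS.to_set.image (fun s => ‖p - s‖ ^ 2)).csInf_mem (S.finite_toSet.image _)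
  exact ⟨s, hs, hps.symm⟩

lemma pcost_le_two_mul_pcost_add (p a : Pt d) (S : Finset (Pt d)) :
    pcost a S ≤ 2 * pcost p S + 2 * ‖p - a‖ ^ 2 := by
  rcases S.eq_empty_or_nonempty with rfl | hS
  · simp [pcost]
  obtain ⟨s, hs, hps⟩ := exists_pcost_eq hS p
  calc pcost a S ≤ ‖a - s‖ ^ 2 := pcost_le_norm_sub_sq hs
    _ ≤ (‖p - a‖ + ‖p - s‖) ^ 2 := by
        gcongr
        simpa [norm_sub_rev a p] using norm_add_le (a - p) (p - s)
    _ ≤ 2 * (‖p - a‖ ^ 2 + ‖p - s‖ ^ 2) := add_sq_le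
    _ = 2 * pcost p S + 2 * ‖p - a‖ ^ 2 := by rw [hps]; ring

lemma card_mul_pcost_le (C S : Finset (Pt d)) (a : Pt d) :
    #C * pcost a S ≤ 2 * scost C S + 2 * ∑ p ∈ C, ‖p - a‖ ^ 2 := by
  calc #C * pcost a S = ∑ _p ∈ C, pcost a S := by rw [sum_const, nsmul_eq_mul]
    _ ≤ ∑ p ∈ C, (2 * pcost p S + 2 * ‖p - a‖ ^ 2) :=
        sum_le_sum fun p _ => pcost_le_two_mul_pcost_add p a S
    _ = 2 * scost C S + 2 * ∑ p ∈ C, ‖p - a‖ ^ 2 := by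
        rw [sum_add_distrib, ← mul_sum, ← mul_sum, scost]

lemma mul_sum_le_card_mul_of_mul_div_le {ι : Type*} {C : Finset ι} {f : ι → ℝ} {c x : ℝ}
    (h : c * ((∑ p ∈ C, f p) / #C) ≤ x) : c * ∑ p ∈ C, f p ≤ #C * x := by
  rcases C.eq_empty_or_nonempty with rfl | hC
  · simp
  have hcard : (0 : ℝ) < #C := by exact_mod_cast hC.card_pos
  calc c * ∑ p ∈ C, f p = #C * (c * ((∑ p ∈ C, f p) / #C)) := by field_simp
    _ ≤ #C * x := by gcongr

lemma half_sub_one_mul_le_scost {C S : Finset (Pt d)} {a : Pt d} {c : ℝ}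
    (htype : c * ((∑ p ∈ C, ‖p - a‖ ^ 2) / #C) ≤ pcost a S) :
    (c / 2 - 1) * ∑ p ∈ C, ‖p - a‖ ^ 2 ≤ scost C S := by
  have := (mul_sum_le_card_mul_of_mul_div_le htype).trans (card_mul_pcost_le C S a)
  linarith

lemma le_scost_of_band_of_type {C S : Finset (Pt d)} {a : Pt d} {T : ℝ} {b t : ℕ}
    (ht : 3 ≤ t) (hband : (2 : ℝ) ^ b * T ≤ ∑ p ∈ C, ‖p - a‖ ^ 2)
    (htype : (2 : ℝ) ^ (t - 1) * ((∑ p ∈ C, ‖p - a‖ ^ 2) / #C) ≤ pcost a S) :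
    1 / 12 * 2 ^ (b + t) * T ≤ scost C S := by
  have hcost := half_sub_one_mul_le_scost htype
  have hW : 0 ≤ ∑ p ∈ C, ‖p - a‖ ^ 2 := sum_nonneg fun p _ => by positivity
  have h8 : (8 : ℝ) ≤ 2 ^ t := by
    calc (8 : ℝ) = 2 ^ 3 := by norm_num
      _ ≤ 2 ^ t := pow_le_pow_right₀ (by norm_num) ht
  have hhalf : (2 : ℝ) ^ (t - 1) / 2 = 2 ^ t / 4 := by
    rw [show t = t - 1 + 1 by omega, pow_succ, Nat.add_sub_cancel]; ring
  rw [hhalf] at hcost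
  rw [pow_add]
  have h2b : (0 : ℝ) < 2 ^ b := by positivity
  rcases le_or_gt T 0 with hT | hT
  · nlinarith [mul_nonpos_of_nonneg_of_nonpos h2b.le hT]
  · nlinarith [mul_le_mul_of_nonneg_left hband (by linarith : (0 : ℝ) ≤ 2 ^ t / 12)]

lemma sum_scost_le_scost {ι : Type*} {J : Finset ι} {C : ι → Finset (Pt d)}
    {P : Finset (Pt d)} (S : Finset (Pt d)) (hsub : ∀ j ∈ J, C j ⊆ P)
    (hdisj : ∀ i ∈ J, ∀ j ∈ J, i ≠ j → Disjoint (C i) (C j)) :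
    ∑ j ∈ J, scost (C j) S ≤ scost P S := by
  have hdisj' : (J : Set ι).PairwiseDisjoint C := fun i hi j hj hij => hdisj i hi j hj hij
  simp only [scost]
  rw [← sum_disjiUnion J C hdisj']
  refine sum_le_sum_of_subset_of_nonneg ?_ fun p _ _ => pcost_nonneg p S
  intro p hp
  obtain ⟨j, hj, hpj⟩ := mem_disjiUnion.1 hp
  exact hsub j hj hpj

end Cost

theorem structured_cost_general
    {d : ℕ} {ι : Type*} (J : Finset ι) (C : ι → Finset (Pt d)) (a : ι → Pt d)
    (P S : Finset (Pt d)) (T : ℝ) (b t : ℕ)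
    (ht : 6 ≤ t)
    -- the clusters in `B(S)` are disjoint subsets of `P`
    (hsub : ∀ j ∈ J, C j ⊆ P)
    (hdisj : ∀ i ∈ J, ∀ j ∈ J, i ≠ j → Disjoint (C i) (C j))
    -- each cluster is in band `b`: `cost(C_j, a_j) ≥ 2^b·T`
    (hband : ∀ j ∈ J, (2 : ℝ) ^ b * T ≤ ∑ p ∈ C j, ‖p - a j‖ ^ 2)
    -- each cluster is of type `t` for `S`: `cost(a_j, S) ≥ 2^{t-1}·Δ_j`
    (htype : ∀ j ∈ J,
      (2 : ℝ) ^ (t - 1) * ((∑ p ∈ C j, ‖p - a j‖ ^ 2) / ((C j).card : ℝ))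
        ≤ pcost (a j) S) :
    (1 / 12 : ℝ) * (J.card : ℝ) * 2 ^ (b + t) * T ≤ scost P S :=
  calc (1 / 12 : ℝ) * (J.card : ℝ) * 2 ^ (b + t) * T
      = ∑ _j ∈ J, 1 / 12 * 2 ^ (b + t) * T := by rw [sum_const, nsmul_eq_mul]; ring
    _ ≤ ∑ j ∈ J, scost (C j) S :=
        sum_le_sum fun j hj => le_scost_of_band_of_type (by omega) (hband j hj) (htype j hj)
    _ ≤ scost P S := sum_scost_le_scost S hsub hdisj

/-- Clusters of band `b` and type `t ≥ 6` force `cost(P,S) ≥ (1/12)·k_B·2^{b+t}·T`. -/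
theorem structured_cost
    {d : ℕ} {ι : Type*} (J : Finset ι) (C : ι → Finset (Pt d)) (a : ι → Pt d)
    (P S : Finset (Pt d)) (T : ℝ) (b t : ℕ)
    (hT : 0 < T) (ht : 6 ≤ t)
    -- the clusters in `B(S)` are disjoint subsets of `P`
    (hsub : ∀ j ∈ J, C j ⊆ P)
    (hdisj : ∀ i ∈ J, ∀ j ∈ J, i ≠ j → Disjoint (C i) (C j))
    -- each cluster is in band `b`: `cost(C_j, a_j) ≥ 2^b·T`
    (hband : ∀ j ∈ J, (2 : ℝ) ^ b * T ≤ ∑ p ∈ C j, ‖p - a j‖ ^ 2)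
    -- each cluster is of type `t` for `S`: `cost(a_j, S) ≥ 2^{t-1}·Δ_j`
    (htype : ∀ j ∈ J,
      (2 : ℝ) ^ (t - 1) * ((∑ p ∈ C j, ‖p - a j‖ ^ 2) / ((C j).card : ℝ))
        ≤ pcost (a j) S) :
    (1 / 12 : ℝ) * (J.card : ℝ) * 2 ^ (b + t) * T ≤ scost P S :=
  structured_cost_general J C a P S T b t ht hsub hdisj hband htype
end
end
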